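/- Let β1, β2 > 0 and define for h > 0 the VP interaction time t_VP(h) = (β1/(2β2))·(√(1 + (4β2/β1²)·log(1 + h²/9)) - 1), and for fixed 0 < σmin < σmax define the VE interaction time t_VE(h) = log((h/3)/σmin)/log(σmax/σmin) for h > 3σmin. Then t_VP(h)/t_VE(h) → 0 as σmin → 0⁺ with h = h(σmin) = σmin^(1/2), i.e., for h → 0 along this regime the VP interaction time is asymptotically smaller than the VE interaction time. -/

import Mathlib

open Filter Topology

/-- With `h = √σmin` and `σmin → 0⁺` (σmax fixed), the ratio of the VP interaction time
to the VE interaction time tends to `0`: the VP interaction time is asymptotically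
smaller. -/
theorem vp_lt_ve_interaction_time (β1 β2 σmax : ℝ) (hβ1 : 0 < β1) (hβ2 : 0 < β2)
    (hσmax : 0 < σmax) :
    Tendsto
      (fun s : ℝ =>
        ((β1 / (2 * β2)) *
            (Real.sqrt (1 + (4 * β2 / β1 ^ 2) *
              Real.log (1 + (Real.sqrt s) ^ 2 / 9)) - 1)) /
          (Real.log ((Real.sqrt s / 3) / s) / Real.log (σmax / s)))
      (nhdsWithin 0 (Set.Ioi 0)) (nhds 0) := by
  -- numerator tends to 0
  have t1 : Tendsto (fun s : ℝ => 1 + (Real.sqrt s) ^ 2 / 9) (nhds 0) (nhds 1) := by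
    have hc : Continuous (fun s : ℝ => 1 + (Real.sqrt s) ^ 2 / 9) := by fun_prop
    have := hc.tendsto 0
    simpa [Real.sqrt_zero] using this
  have t2 : Tendsto Real.log (nhds (1:ℝ)) (nhds 0) := by
    simpa using (Real.continuousAt_log (by norm_num : (1:ℝ) ≠ 0)).tendsto
  have t4 : Tendsto (fun s : ℝ => 1 + (4 * β2 / β1 ^ 2) *
      Real.log (1 + (Real.sqrt s) ^ 2 / 9)) (nhds 0) (nhds 1) := by
    simpa using tendsto_const_nhds.add (tendsto_const_nhds.mul (t2.comp t1))
  have t5 : Tendsto Real.sqrt (nhds (1:ℝ)) (nhds 1) := by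
    simpa [Real.sqrt_one] using Real.continuous_sqrt.tendsto 1
  have hN : Tendsto (fun s : ℝ =>
      (β1 / (2 * β2)) *
        (Real.sqrt (1 + (4 * β2 / β1 ^ 2) *
          Real.log (1 + (Real.sqrt s) ^ 2 / 9)) - 1)) (nhdsWithin 0 (Set.Ioi 0)) (nhds 0) := by
    have h6 : Tendsto (fun s : ℝ => Real.sqrt (1 + (4 * β2 / β1 ^ 2) *
        Real.log (1 + (Real.sqrt s) ^ 2 / 9)) - 1) (nhds 0) (nhds 0) := by
      have := (t5.comp t4).sub (tendsto_const_nhds (x := (1:ℝ)))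
      simpa [Function.comp] using this
    have h7 := (h6.const_mul (β1 / (2 * β2))).mono_left
      (nhdsWithin_le_nhds : nhdsWithin (0:ℝ) (Set.Ioi 0) ≤ nhds 0)
    simpa using h7
  -- denominator tends to 1/2
  have hg : Tendsto (fun y : ℝ => (y / 2 - Real.log 3 - y) / (Real.log σmax - y))
      atBot (nhds (1/2 : ℝ)) := by
    have tib : Tendsto (fun y : ℝ => y⁻¹) atBot (nhds 0) := by
      have h := (tendsto_inv_atTop_zero (𝕜 := ℝ)).comp tendsto_neg_atBot_atTop
      have := h.neg
      simpa [Function.comp, inv_neg] using this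
    have key : Tendsto (fun y : ℝ => (-(1/2) - Real.log 3 * y⁻¹) / (Real.log σmax * y⁻¹ - 1))
        atBot (nhds ((-(1/2) - Real.log 3 * 0) / (Real.log σmax * 0 - 1))) := by
      apply Tendsto.div
      · exact tendsto_const_nhds.sub (tendsto_const_nhds.mul tib)
      · exact (tendsto_const_nhds.mul tib).sub tendsto_const_nhds
      · norm_num
    norm_num at key
    have heq : ∀ᶠ y : ℝ in atBot,
        (-(1/2) - Real.log 3 * y⁻¹) / (Real.log σmax * y⁻¹ - 1)
          = (y / 2 - Real.log 3 - y) / (Real.log σmax - y) := by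
      filter_upwards [eventually_lt_atBot (0:ℝ)] with y hy
      have hy' : y ≠ 0 := ne_of_lt hy
      rw [show (-(1/2) - Real.log 3 * y⁻¹) = (y / 2 - Real.log 3 - y) * y⁻¹ by
            field_simp; ring,
          show (Real.log σmax * y⁻¹ - 1) = (Real.log σmax - y) * y⁻¹ by field_simp,
          mul_div_mul_right _ _ (inv_ne_zero hy')]
    exact Tendsto.congr' heq key
  have hD : Tendsto (fun s : ℝ => Real.log ((Real.sqrt s / 3) / s) / Real.log (σmax / s))
      (nhdsWithin 0 (Set.Ioi 0)) (nhds (1/2 : ℝ)) := by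
    have hcomp := hg.comp Real.tendsto_log_nhdsGT_zero
    apply hcomp.congr'
    filter_upwards [self_mem_nhdsWithin] with s hs
    have hs0 : (0:ℝ) < s := hs
    have hsq : (0:ℝ) < Real.sqrt s := Real.sqrt_pos.mpr hs0
    simp only [Function.comp]
    rw [Real.log_div (by positivity) (ne_of_gt hs0), Real.log_div (ne_of_gt hsq) (by norm_num),
      Real.log_div (ne_of_gt hσmax) (ne_of_gt hs0), Real.log_sqrt hs0.le]
  have := hN.div hD (by norm_num)
  simpa [Pi.div_def] using this
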